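/- Let E be a Hermite–Biehler function with no real zeros and f a real entire function with sup_{x∈ℝ}|f(x)/E(x)| ≤ 1 (with f/E and f^#/E bounded analytic in ℂ₊). If f(ξ) = e^{iα}E(ξ) for some real ξ and real α with |E(ξ)| = e^{iα}E(ξ)·(a positive real), then every real zero of the entire function φ(z) = f(z) − e^{iα}E(z) is simple. -/

import Mathlib

open Complex

noncomputable section

/-- `f^#(z) = conj (f (conj z))`. -/
def fsharp (f : ℂ → ℂ) : ℂ → ℂ := fun z => (starRingEnd ℂ) (f ((starRingEnd ℂ) z))

/-- The Hermite–Biehler class. -/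
def HermiteBiehler (E : ℂ → ℂ) : Prop :=
  Differentiable ℂ E ∧ ∀ z : ℂ, 0 < z.im →
    ‖E ((starRingEnd ℂ) z)‖ < ‖E z‖

open Filter Set Topology Real

section Helpers

lemma differentiable_fsharp {f : ℂ → ℂ} (hf : Differentiable ℂ f) :
    Differentiable ℂ (fsharp f) := by
  intro z
  have h := (hf ((starRingEnd ℂ) z)).hasDerivAt
  rw [hasDerivAt_iff_tendsto_slope] at h
  have h1 : Tendsto (starRingEnd ℂ) (𝓝[≠] z) (𝓝[≠] ((starRingEnd ℂ) z)) := by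
    refine ContinuousWithinAt.tendsto_nhdsWithin
      (continuous_star.continuousWithinAt) ?_
    intro u hu hc
    exact hu (by simpa using congrArg (starRingEnd ℂ) hc)
  have h2 := h.comp h1
  have h3 := ((continuous_star.tendsto _).comp h2 :
    Tendsto (fun u => (starRingEnd ℂ) (slope f ((starRingEnd ℂ) z) ((starRingEnd ℂ) u)))
      (𝓝[≠] z) (𝓝 ((starRingEnd ℂ) (deriv f ((starRingEnd ℂ) z)))))
  have h4 : Tendsto (slope (fsharp f) z) (𝓝[≠] z)
      (𝓝 ((starRingEnd ℂ) (deriv f ((starRingEnd ℂ) z)))) := by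
    refine h3.congr fun u => ?_
    simp only [slope_def_field, fsharp, Function.comp_apply, ← starRingEnd_apply,
      map_div₀, map_sub, Complex.conj_conj]
  exact (hasDerivAt_iff_tendsto_slope.2 h4).differentiableAt

lemma entire_eq_of_real_eq {f g : ℂ → ℂ} (hf : Differentiable ℂ f) (hg : Differentiable ℂ g)
    (h : ∀ x : ℝ, f x = g x) : f = g := by
  have hfa : AnalyticOnNhd ℂ f univ := fun z _ => hf.analyticAt z
  have hga : AnalyticOnNhd ℂ g univ := fun z _ => hg.analyticAt z
  have ht : Tendsto (fun n : ℕ => ((1 / (n + 1) : ℝ) : ℂ)) atTop (𝓝[≠] (0 : ℂ)) := by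
    rw [tendsto_nhdsWithin_iff]
    constructor
    · have h1 : Tendsto (fun n : ℕ => (1 / (n + 1) : ℝ)) atTop (𝓝 0) :=
        tendsto_one_div_add_atTop_nhds_zero_nat
      have h2 := (Complex.continuous_ofReal.tendsto 0).comp h1
      simpa [Function.comp_def] using h2
    · refine Eventually.of_forall fun n => ?_
      simp only [mem_compl_iff, mem_singleton_iff]
      norm_cast
      positivity
  have hfreq : ∃ᶠ z in 𝓝[≠] (0 : ℂ), f z = g z :=
    ht.frequently (Frequently.of_forall fun n => h _)
  funext z
  exact hfa.eqOn_of_preconnected_of_frequently_eq hga isPreconnected_univ (mem_univ 0)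
    hfreq (mem_univ z)

lemma pl_uhp {g : ℂ → ℂ} {C : ℝ}
    (hd : DifferentiableOn ℂ g {z : ℂ | 0 < z.im})
    (hc : ContinuousOn g {z : ℂ | 0 ≤ z.im})
    (hC : ∀ z : ℂ, 0 < z.im → ‖g z‖ ≤ C)
    (hb : ∀ x : ℝ, ‖g x‖ ≤ 1) :
    ∀ z : ℂ, 0 ≤ z.im → ‖g z‖ ≤ 1 := by
  intro z hz
  set G : ℂ → ℂ := fun w => g (I * w) with hG
  have hmaps : ∀ w : ℂ, (I * w).im = w.re := by intro w; simp
  have hdG : DiffContOnCl ℂ G {w : ℂ | 0 < w.re} := by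
    constructor
    · exact hd.comp ((differentiable_const I).mul differentiable_id).differentiableOn
        (fun w hw => by simpa [hmaps] using hw)
    · refine (hc.comp ((continuous_const.mul continuous_id).continuousOn)
        (fun w hw => ?_)).mono (closure_minimal (fun w hw => le_of_lt hw)
          (isClosed_le continuous_const Complex.continuous_re))
      have hw' : 0 ≤ w.re := hw
      simpa [hmaps] using hw'
  have key : ∀ w : ℂ, 0 ≤ w.re → ‖G w‖ ≤ 1 := by
    intro w hw
    refine PhragmenLindelof.right_half_plane_of_bounded_on_real hdG ?_ ?_ ?_ hw
    · refine ⟨1, one_lt_two, 0, ?_⟩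
      refine Asymptotics.IsBigO.of_bound (max C 0) ?_
      rw [eventually_inf_principal]
      refine Eventually.of_forall fun u hu => ?_
      have h1 : ‖G u‖ ≤ C := hC _ (by simpa [hmaps] using hu)
      simp only [Real.norm_eq_abs, zero_mul, Real.exp_zero, abs_one, mul_one]
      exact h1.trans (le_max_left _ _)
    · refine ⟨max C 0, ?_⟩
      rw [eventually_map]
      filter_upwards [eventually_gt_atTop (0 : ℝ)] with x hx
      exact (hC _ (by simpa [hmaps] using hx)).trans (le_max_left _ _)
    · intro x
      have h2 : I * (x * I) = ((-x : ℝ) : ℂ) := by push_cast; ring_nf; simp [Complex.I_sq]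
      simpa [G, h2] using hb (-x)
  have h1 : I * (-I * z) = z := by
    have h3 : I * -I = 1 := by simp [Complex.I_mul_I]
    calc I * (-I * z) = (I * -I) * z := by ring
    _ = z := by rw [h3, one_mul]
  have hkey := key (-I * z) (by simpa using hz)
  have h2 : G (-I * z) = g z := by
    show g (I * (-I * z)) = g z
    rw [h1]
  rw [h2] at hkey
  exact hkey

lemma exists_angle (w : ℂ) (hw : w ≠ 0) (k : ℕ) (hk : 2 ≤ k) :
    ∃ θ : ℝ, 0 < θ ∧ θ < π ∧ 0 < (Complex.exp (((k : ℝ) * θ : ℝ) * I) * w).re := by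
  have hπ := Real.pi_pos
  have hkR : (2 : ℝ) ≤ (k : ℝ) := by exact_mod_cast hk
  have hk0 : (0 : ℝ) < (k : ℝ) := by linarith
  have harg1 := Complex.neg_pi_lt_arg w
  have harg2 := Complex.arg_le_pi w
  have key : ∀ t : ℝ, 0 < t → t < 2 * π → 0 < Real.cos (t + w.arg) →
      ∃ θ : ℝ, 0 < θ ∧ θ < π ∧ 0 < (Complex.exp (((k : ℝ) * θ : ℝ) * I) * w).re := by
    intro t ht0 ht2 hcos
    refine ⟨t / k, by positivity, ?_, ?_⟩
    · calc t / k ≤ t / 2 := by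
            apply div_le_div_of_nonneg_left ht0.le two_pos hkR
          _ < π := by linarith
    · have hkt : (k : ℝ) * (t / k) = t := by field_simp
      rw [hkt]
      have hre : (Complex.exp ((t : ℝ) * I) * w).re = ‖w‖ * Real.cos (t + w.arg) := by
        conv_lhs => rw [← Complex.norm_mul_exp_arg_mul_I w]
        have heq : Complex.exp ((t : ℝ) * I) * ((‖w‖ : ℂ) * Complex.exp (w.arg * I))
            = (‖w‖ : ℂ) * Complex.exp (((t + w.arg : ℝ) : ℂ) * I) := by
          rw [mul_comm, mul_assoc, ← Complex.exp_add]
          push_cast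
          ring_nf
        rw [heq, Complex.re_ofReal_mul, Complex.exp_ofReal_mul_I_re]
      rw [hre]
      have hwpos : 0 < ‖w‖ := norm_pos_iff.mpr hw
      positivity
  rcases lt_trichotomy w.arg 0 with h | h | h
  · exact key (-w.arg) (by linarith) (by linarith) (by simp)
  · refine key (π / 4) (by linarith) (by linarith) ?_
    rw [h, add_zero]
    exact Real.cos_pos_of_mem_Ioo (by constructor <;> [linarith; linarith])
  · refine key (2 * π - w.arg) (by linarith) (by linarith) ?_
    have h4 : 2 * π - w.arg + w.arg = 2 * π := by ring
    rw [h4, Real.cos_two_pi]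
    norm_num

end Helpers

/-- Every real zero of `φ(z) = f(z) − e^{iα} E(z)` is simple, when `E` is
Hermite–Biehler without real zeros, `f` is real entire with `‖f/E‖_∞ ≤ 1`
(and `f/E`, `f^#/E` bounded analytic in the upper half-plane), and
`f(ξ) = e^{iα}E(ξ)` with `E(ξ) = e^{-iα}|E(ξ)|`. -/
theorem real_zeros_simple (E f : ℂ → ℂ) (hE : HermiteBiehler E)
    (hEr : ∀ x : ℝ, E x ≠ 0)
    (hf : Differentiable ℂ f) (hreal : ∀ x : ℝ, (f x).im = 0)
    (hbound : ∀ x : ℝ, ‖f x‖ ≤ ‖E x‖)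
    (hup : ∃ C : ℝ, ∀ z : ℂ, 0 < z.im → ‖f z‖ ≤ C * ‖E z‖)
    (hup' : ∃ C : ℝ, ∀ z : ℂ, 0 < z.im →
      ‖fsharp f z‖ ≤ C * ‖E z‖)
    (ξ α : ℝ)
    (hα : E ξ = Complex.exp (-(α * Complex.I)) * (‖E ξ‖ : ℂ))
    (hξ : f ξ = Complex.exp (α * Complex.I) * E ξ) :
    ∀ η : ℝ, f η - Complex.exp (α * Complex.I) * E η = 0 →
      deriv (fun z : ℂ => f z - Complex.exp (α * Complex.I) * E z) η ≠ 0 := by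
  obtain ⟨hEd, hElt⟩ := hE
  set c : ℂ := Complex.exp (α * I) with hc
  have hc0 : c ≠ 0 := Complex.exp_ne_zero _
  have hcabs : ‖c‖ = 1 := by
    rw [hc, Complex.norm_exp]
    simp
  intro η hφη hd
  set φ : ℂ → ℂ := fun z => f z - c * E z with hφdef
  have hφd : Differentiable ℂ φ := hf.sub (hEd.const_mul c)
  have hEnz : ∀ z : ℂ, 0 ≤ z.im → E z ≠ 0 := by
    intro z hz
    rcases hz.lt_or_eq with h | h
    · intro h0
      have h1 := hElt z h
      rw [h0, norm_zero] at h1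
      exact (norm_nonneg _).not_gt h1
    · have hz0 : z = (z.re : ℂ) := by
        apply Complex.ext <;> simp [← h]
      rw [hz0]
      exact hEr z.re
  obtain ⟨C, hCb⟩ := hup
  have hg1 : ∀ z : ℂ, 0 ≤ z.im → ‖f z / E z‖ ≤ 1 := by
    refine pl_uhp (C := C)
      (hf.differentiableOn.div hEd.differentiableOn fun z hz => hEnz z (le_of_lt hz))
      (hf.continuous.continuousOn.div hEd.continuous.continuousOn fun z hz => hEnz z hz)
      ?_ ?_
    · intro z hz
      rw [norm_div, div_le_iff₀ (norm_pos_iff.mpr (hEnz z hz.le))]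
      exact hCb z hz
    · intro x
      rw [norm_div, div_le_one (norm_pos_iff.mpr (hEr x))]
      exact hbound x
  have hφa : AnalyticAt ℂ φ η := hφd.analyticAt η
  by_cases hord : analyticOrderAt φ η = ⊤
  · -- degenerate case : φ vanishes identically, contradiction with strict HB
    have hev : φ =ᶠ[𝓝 (η : ℂ)] 0 := analyticOrderAt_eq_top.1 hord
    have hA : AnalyticOnNhd ℂ φ univ := fun z _ => hφd.analyticAt z
    have hall : ∀ z : ℂ, φ z = 0 := fun z =>
      hA.eqOn_zero_of_preconnected_of_eventuallyEq_zero isPreconnected_univ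
        (mem_univ (η : ℂ)) hev (mem_univ z)
    have hfE : ∀ z, f z = c * E z := by
      intro z
      have h1 := hall z
      rwa [hφdef, sub_eq_zero] at h1
    have hsharp : fsharp f = f := by
      refine entire_eq_of_real_eq (differentiable_fsharp hf) hf fun x => ?_
      simp only [fsharp]
      rw [Complex.conj_ofReal]
      exact Complex.conj_eq_iff_im.2 (hreal x)
    have h1 : ‖E ((starRingEnd ℂ) I)‖ < ‖E I‖ := hElt I (by simp)
    have h2 : ‖f ((starRingEnd ℂ) I)‖ = ‖f I‖ := by
      have h3 : ‖fsharp f I‖ = ‖f ((starRingEnd ℂ) I)‖ := by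
        simp [fsharp]
      rw [← h3, hsharp]
    have h4 : ∀ w : ℂ, ‖f w‖ = ‖E w‖ := by
      intro w
      rw [hfE w, norm_mul, hcabs, one_mul]
    rw [h4, h4] at h2
    exact absurd h1 (by rw [h2]; exact lt_irrefl _)
  · -- main case
    obtain ⟨k, hk⟩ := WithTop.ne_top_iff_exists.1 hord
    obtain ⟨h, hha, hh0, hhev⟩ := (hφa.analyticOrderAt_eq_natCast (n := k)).1 hk.symm
    have hφη0 : φ (η : ℂ) = 0 := hφη
    have hk0 : k ≠ 0 := by
      rintro rfl
      have h1 := hhev.self_of_nhds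
      rw [hφη0] at h1
      simp at h1
      exact hh0 h1.symm
    have hk1 : k ≠ 1 := by
      rintro rfl
      have hder : HasDerivAt (fun z : ℂ => (z - (η : ℂ)) ^ 1 • h z) (h η) η := by
        have h1 : HasDerivAt (fun z : ℂ => z - (η : ℂ)) 1 η := (hasDerivAt_id _).sub_const _
        have h2 : HasDerivAt h (deriv h η) η := hha.differentiableAt.hasDerivAt
        have h3 := h1.mul h2
        simp only [sub_self, zero_mul, one_mul, add_zero] at h3
        simp only [pow_one, smul_eq_mul]
        exact h3
      have h5 : deriv φ η = h η := by
        rw [Filter.EventuallyEq.deriv_eq hhev]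
        exact hder.deriv
      rw [hd] at h5
      exact hh0 h5.symm
    have hk2 : 2 ≤ k := by omega
    set ψ : ℂ → ℂ := fun z => c⁻¹ * h z / E z with hψdef
    have hψη : ψ η ≠ 0 := div_ne_zero (mul_ne_zero (inv_ne_zero hc0) hh0) (hEr η)
    have hψcont : ContinuousAt ψ η :=
      (continuousAt_const.mul hha.continuousAt).div hEd.continuous.continuousAt (hEr η)
    obtain ⟨θ, hθ0, hθπ, hre⟩ := exists_angle (ψ η) hψη k hk2
    have hcont2 : ContinuousAt
        (fun z => (Complex.exp (((k : ℝ) * θ : ℝ) * I) * ψ z).re) η :=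
      Complex.continuous_re.continuousAt.comp (continuousAt_const.mul hψcont)
    have hevpos : ∀ᶠ z in 𝓝 (η : ℂ),
        0 < (Complex.exp (((k : ℝ) * θ : ℝ) * I) * ψ z).re :=
      hcont2.eventually (eventually_gt_nhds hre)
    have hboth := hhev.and hevpos
    have htends : Tendsto (fun r : ℝ => (η : ℂ) + r * Complex.exp ((θ : ℝ) * I))
        (𝓝[>] (0 : ℝ)) (𝓝 (η : ℂ)) := by
      have hcont3 : Continuous fun r : ℝ => (η : ℂ) + r * Complex.exp ((θ : ℝ) * I) :=
        continuous_const.add (Complex.continuous_ofReal.mul continuous_const)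
      have h0 := hcont3.tendsto 0
      simp only [Complex.ofReal_zero, zero_mul, add_zero] at h0
      exact h0.mono_left nhdsWithin_le_nhds
    obtain ⟨r, ⟨hfac, hpos⟩, hr0⟩ := ((htends.eventually hboth).and self_mem_nhdsWithin).exists
    set z : ℂ := (η : ℂ) + r * Complex.exp ((θ : ℝ) * I) with hzdef
    have hzim : 0 < z.im := by
      have him : z.im = r * Real.sin θ := by
        simp [hzdef, Complex.add_im, Complex.mul_im, Complex.exp_ofReal_mul_I_re,
          Complex.exp_ofReal_mul_I_im]
      rw [him]
      exact mul_pos hr0 (Real.sin_pos_of_pos_of_lt_pi hθ0 hθπ)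
    have hEz : E z ≠ 0 := hEnz z hzim.le
    have hzη : z - (η : ℂ) = r * Complex.exp ((θ : ℝ) * I) := by
      rw [hzdef]; ring
    have hfz : c⁻¹ * f z / E z = 1 + (z - (η : ℂ)) ^ k * ψ z := by
      have h1 : f z = φ z + c * E z := by rw [hφdef]; ring
      rw [h1, hfac, smul_eq_mul, hψdef]
      field_simp
      ring
    have habs : ‖c⁻¹ * f z / E z‖ ≤ 1 := by
      rw [norm_div, norm_mul, norm_inv, hcabs, inv_one, one_mul, ← norm_div]
      exact hg1 z hzim.le
    have hgt : 1 < (1 + (z - (η : ℂ)) ^ k * ψ z).re := by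
      rw [Complex.add_re, Complex.one_re]
      have hpow : ((z - (η : ℂ)) ^ k * ψ z).re
          = r ^ k * (Complex.exp (((k : ℝ) * θ : ℝ) * I) * ψ z).re := by
        rw [hzη, mul_pow, ← Complex.exp_nat_mul]
        have hc1 : ((r : ℂ)) ^ k = ((r ^ k : ℝ) : ℂ) := by push_cast; ring
        have hc2 : ((k : ℂ)) * ((θ : ℝ) * I) = (((k : ℝ) * θ : ℝ) : ℂ) * I := by
          push_cast; ring
        rw [hc1, hc2, mul_assoc, Complex.re_ofReal_mul]
      rw [hpow]
      have := mul_pos (pow_pos hr0 k) hpos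
      linarith
    have hle : (1 + (z - (η : ℂ)) ^ k * ψ z).re ≤ 1 := by
      calc (1 + (z - (η : ℂ)) ^ k * ψ z).re ≤ ‖1 + (z - (η : ℂ)) ^ k * ψ z‖ :=
            Complex.re_le_norm _
        _ = ‖c⁻¹ * f z / E z‖ := by rw [hfz]
        _ ≤ 1 := habs
    linarith
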